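/- (Compatibility with the Lebesgue integral for infinite chains of finite mass) Let n ≥ 1 and let Σ_{i=1}^∞ aᵢσᵢ be a formal infinite sum of oriented n-simplices in ℝ^n with real coefficients such that Σ|aᵢ|M_n(σᵢ) < ∞. Then the partial sums A_k = Σ_{i=1}^k aᵢσᵢ form a Cauchy sequence in the n-natural norm, converging to some A ∈ X_{n,n}(ℝ^n); and for every bounded continuous n-form ω = g dx₁∧⋯∧dxₙ on ℝ^n, the extended integral satisfies L_ω·A = ∫_{ℝ^n} A(x) g(x) dm_n(x), where A(x) = Σᵢ ±aᵢ (the sum over those i with x in the interior of σᵢ, signed according to whether the orientation of σᵢ agrees with the standard orientation of ℝ^n) is the coefficient function of the infinite chain, which is defined almost everywhere and integrable. -/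

import Mathlib

open MeasureTheory Filter Metric Set

noncomputable section

/-- Euclidean `m`-space `ℝ^m`. -/
abbrev Euc (m : ℕ) : Type := EuclideanSpace ℝ (Fin m)

/-- An oriented `n`-simplex in `ℝ^m`, recorded by its ordered list of `n+1` vertices. -/
abbrev Splx (n m : ℕ) : Type := Fin (n + 1) → Euc m

/-- Formal sums `Σ aᵢ σᵢ` of oriented `n`-simplices in `ℝ^m` with real coefficients. -/
abbrev FormalSum (n m : ℕ) : Type := Splx n m →₀ ℝ

/-- Unbundled (raw) `n`-forms on `ℝ^m`: a scalar depending on a point and `n` vectors. -/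
abbrev RawForm (n m : ℕ) : Type := Euc m → (Fin n → Euc m) → ℝ

/-- Continuous multilinear maps in `n` variables on `ℝ^m` (the value space of forms). -/
abbrev CMM (n m : ℕ) : Type := ContinuousMultilinearMap ℝ (fun _ : Fin n => Euc m) ℝ

/-- A multilinear map is alternating. -/
def IsAlt {n m : ℕ} (g : CMM n m) : Prop :=
  ∀ (v : Fin n → Euc m) (i j : Fin n), i ≠ j → v i = v j → g v = 0

/-- A differential `n`-form on `ℝ^m`: an alternating-multilinear-map valued function. -/
def Form (n m : ℕ) : Type := {ω : Euc m → CMM n m // ∀ x, IsAlt (ω x)}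

/-- The raw form underlying a differential form. -/
def Form.raw {n m : ℕ} (ω : Form n m) : RawForm n m := fun x v => ω.1 x v

/-- The standard `n`-simplex as a subset of `ℝ^n`. -/
def stdSimplexSet (n : ℕ) : Set (Fin n → ℝ) := {t | (∀ i, 0 ≤ t i) ∧ ∑ i, t i ≤ 1}

/-- The (Riemann/Lebesgue) integral of a raw `n`-form over an oriented `n`-simplex,
computed through the affine parametrization by the standard simplex. -/
def simplexIntegral {n m : ℕ} (σ : Splx n m) (ω : RawForm n m) : ℝ :=
  ∫ t in stdSimplexSet n,
    ω (σ 0 + ∑ i : Fin n, t i • (σ i.succ - σ 0)) (fun i => σ i.succ - σ 0)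

/-- Integration of a raw `n`-form over formal sums, as a linear map in the chain. -/
def chainIntegralL (n m : ℕ) (ω : RawForm n m) : FormalSum n m →ₗ[ℝ] ℝ :=
  Finsupp.linearCombination ℝ (fun σ => simplexIntegral σ ω)

/-- `∫_A ω` for a formal sum `A = Σ aᵢ σᵢ`. -/
def chainIntegral {n m : ℕ} (A : FormalSum n m) (ω : RawForm n m) : ℝ :=
  chainIntegralL n m ω A

/-- The submodule of formal sums that are *null*, i.e. integrate to `0` against every
continuous differential `n`-form.  Two formal sums define the same simplicial chain
(the coefficient functions on each affine `n`-plane agree off a Lebesgue null set)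
precisely when their difference is null. -/
def nullChains (n m : ℕ) : Submodule ℝ (FormalSum n m) :=
  ⨅ ω ∈ {ω : Form n m | Continuous ω.1}, LinearMap.ker (chainIntegralL n m ω.raw)

/-- Equivalence of formal sums: they represent the same simplicial chain. -/
def ChainEquiv {n m : ℕ} (A B : FormalSum n m) : Prop := A - B ∈ nullChains n m

/-- The `n`-dimensional volume of an `n`-simplex in `ℝ^m` (Gram determinant formula). -/
def simplexVolume {n m : ℕ} (σ : Splx n m) : ℝ :=
  Real.sqrt (Matrix.det (Matrix.of fun i j : Fin n =>
    (inner ℝ (σ i.succ - σ 0) (σ j.succ - σ 0) : ℝ))) / (Nat.factorial n : ℝ)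

/-- The `n`-element coordinate subsets of `Fin m`, indexing coordinate `n`-planes. -/
def coordPlanes (m k : ℕ) : Finset (Finset (Fin m)) :=
  Finset.univ.filter fun s => s.card = k

/-- Orthogonal projection of `ℝ^m` onto the coordinate plane indexed by `s`. -/
def coordProj (m : ℕ) (s : Finset (Fin m)) : Euc m → Euc m :=
  fun x => WithLp.toLp 2 (fun i => if i ∈ s then x i else 0)

/-- The projected `λ`-mass `M_{λ,π}(A) = inf { Σ |aᵢ| (Mₙ(π σᵢ))^{λ/n} : Σ aᵢσᵢ ∼ A }`. -/
def projMass (n m : ℕ) (lam : ℝ) (p : Euc m → Euc m) (A : FormalSum n m) : ℝ :=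
  sInf { r | ∃ B : FormalSum n m, ChainEquiv B A ∧
    r = ∑ σ ∈ B.support, |B σ| * simplexVolume (p ∘ σ) ^ (lam / n) }

/-- The `n`-mass of a simplicial `n`-chain. -/
def massNorm (n m : ℕ) (A : FormalSum n m) : ℝ := projMass n m n id A

/-- The simplicial boundary operator on formal sums. -/
def boundaryL (n m : ℕ) : FormalSum (n + 1) m →ₗ[ℝ] FormalSum n m :=
  Finsupp.linearCombination ℝ (fun σ => ∑ i : Fin (n + 2),
    Finsupp.single (fun j => σ (i.succAbove j)) ((-1 : ℝ) ^ (i : ℕ)))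

/-- Whitney's flat norm `|A|^♭ = inf { Mₙ(A - ∂C) + M_{n+1}(C) }`. -/
def flatNorm (n m : ℕ) (A : FormalSum n m) : ℝ :=
  sInf { r | ∃ C : FormalSum (n + 1) m,
    r = massNorm n m (A - boundaryL n m C) + massNorm (n + 1) m C }

/-- Auxiliary recursion (on `fuel`, the integer part of `λ - n`) for the natural norms. -/
def naturalNormAux (m : ℕ) : ℕ → (n : ℕ) → ℝ → FormalSum n m → ℝ
  | 0, n, lam, A => ∑ s ∈ coordPlanes m n, projMass n m lam (coordProj m s) A
  | fuel + 1, n, lam, A =>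
    if lam ≤ n then ∑ s ∈ coordPlanes m n, projMass n m lam (coordProj m s) A
    else ∑ s ∈ coordPlanes m n,
      sInf { r | ∃ C : FormalSum (n + 1) m,
        r = projMass n m n (coordProj m s) (A - boundaryL n m C)
          + naturalNormAux m fuel (n + 1) lam C }

/-- The `λ`-natural norm `|A|^♮_λ` of a simplicial `n`-chain in `ℝ^m`. -/
def naturalNorm (n m : ℕ) (lam : ℝ) (A : FormalSum n m) : ℝ :=
  naturalNormAux m (m - n) n lam A

/-- A sequence of simplicial `n`-chains that is Cauchy in the `λ`-natural norm;
such sequences represent the elements of the completion `X_{n,λ}(ℝ^m)`. -/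
def NatCauchy (n m : ℕ) (lam : ℝ) (A : ℕ → FormalSum n m) : Prop :=
  ∀ ε > 0, ∃ N, ∀ j ≥ N, ∀ k ≥ N, naturalNorm n m lam (A j - A k) < ε

/-- `K` is a `C^s`-(Hölder-)bound for `f`: all derivatives up to order `⌊s⌋` are bounded
by `K` and the top ones are `(s - ⌊s⌋)`-Hölder with constant `K`. -/
def HolderBound {E F : Type} [NormedAddCommGroup E] [NormedSpace ℝ E]
    [NormedAddCommGroup F] [NormedSpace ℝ F] (s : ℝ) (f : E → F) (K : ℝ) : Prop :=
  0 ≤ K ∧ ContDiff ℝ (⌊s⌋₊) f ∧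
    (∀ j ≤ ⌊s⌋₊, ∀ x, ‖iteratedFDeriv ℝ j f x‖ ≤ K) ∧
    (∀ x y, ‖iteratedFDeriv ℝ ⌊s⌋₊ f x - iteratedFDeriv ℝ ⌊s⌋₊ f y‖
      ≤ K * ‖x - y‖ ^ (s - ⌊s⌋₊))

/-- `f` is of class `C^s` (with finite `C^s` norm). -/
def IsCs {E F : Type} [NormedAddCommGroup E] [NormedSpace ℝ E]
    [NormedAddCommGroup F] [NormedSpace ℝ F] (s : ℝ) (f : E → F) : Prop :=
  ∃ K, HolderBound s f K

/-- The `C^s` (Hölder) norm of `f`. -/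
def holderNorm {E F : Type} [NormedAddCommGroup E] [NormedSpace ℝ E]
    [NormedAddCommGroup F] [NormedSpace ℝ F] (s : ℝ) (f : E → F) : ℝ :=
  sInf {K | HolderBound s f K}

/-- The exterior derivative of a differential `n`-form, as a raw `(n+1)`-form. -/
def extDerivRaw {n m : ℕ} (ω : Form n m) : RawForm (n + 1) m :=
  fun x v => ∑ i : Fin (n + 1),
    (-1 : ℝ) ^ (i : ℕ) * fderiv ℝ ω.1 x (v i) (fun j => v (i.succAbove j))


/-- The sign of the orientation of a nondegenerate `n`-simplex in `ℝ^n` relative to the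
standard orientation of `ℝ^n`. -/
def orientSign {n : ℕ} (σ : Splx n n) : ℝ :=
  Real.sign (Matrix.det (Matrix.of fun i j : Fin n => (σ j.succ - σ 0) i))

/-- The coefficient function `x ↦ Σᵢ ± aᵢ` of an infinite chain `Σ aᵢσᵢ` in `ℝ^n` (summing
over the simplices whose interior contains `x`, with sign according to orientation). -/
def coeffFun {n : ℕ} (a : ℕ → ℝ) (σ : ℕ → Splx n n) : Euc n → ℝ :=
  fun x => ∑' i : ℕ,
    Set.indicator (interior (convexHull ℝ (Set.range (σ i))))
      (fun _ => orientSign (σ i) * a i) x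

/-! Integrating `g dx₁ ∧ ⋯ ∧ dxₙ` over an oriented simplex `σ` pulls back, through the
affine map from the standard simplex, to `±∫ g` over `σ` (sign of the orientation; the
boundary is Lebesgue-null). So the integral over the `k`-th partial sum is `∫ Aₖ g`, where
`Aₖ = Σ_{i<k} ±aᵢ 1_{int σᵢ}`. Each term has `L¹` norm at most a fixed multiple of
`|aᵢ| Mₙ(σᵢ)`, so the series converges in `L¹`: its sum, the coefficient function, is
integrable and `∫ Aₖ g → ∫ A g`. In `ℝⁿ` the `n`-natural norm is the mass, and the mass of a
finite formal sum is at most `Σ |aᵢ| Mₙ(σᵢ)`, so the partial sums are Cauchy. -/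

lemma Real.sign_mul_abs (x : ℝ) : Real.sign x * |x| = x := by
  rcases lt_trichotomy x 0 with h | rfl | h
  · rw [Real.sign_of_neg h, abs_of_neg h]; ring
  · simp
  · rw [Real.sign_of_pos h, abs_of_pos h]; ring

lemma Real.abs_sign_le_one (x : ℝ) : |Real.sign x| ≤ 1 := by
  rcases Real.sign_apply_eq x with h | h | h <;> simp [h]

lemma Convex.interior_ae_eq {E : Type*} [NormedAddCommGroup E] [NormedSpace ℝ E]
    [MeasurableSpace E] [BorelSpace E] [FiniteDimensional ℝ E] (μ : Measure E)
    [μ.IsAddHaarMeasure] {s : Set E} (hs : Convex ℝ s) : interior s =ᵐ[μ] s :=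
  ae_eq_set.2 ⟨by simp [sdiff_eq_empty.2 interior_subset],
    measure_mono_null (sdiff_subset_sdiff_left subset_closure) (hs.addHaar_frontier μ)⟩

section SimplexGeometry

variable {n : ℕ}

def edgeMatrix (τ : Splx n n) : Matrix (Fin n) (Fin n) ℝ :=
  Matrix.of fun i j => (τ j.succ - τ 0) i

lemma orientSign_eq_sign_det (τ : Splx n n) : orientSign τ = Real.sign (edgeMatrix τ).det := rfl

lemma simplexVolume_nonneg {m : ℕ} (τ : Splx n m) : 0 ≤ simplexVolume τ := by
  unfold simplexVolume; positivity

lemma simplexVolume_eq_abs_det (τ : Splx n n) :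
    simplexVolume τ = |(edgeMatrix τ).det| / n.factorial := by
  have hgram : (Matrix.of fun i j : Fin n =>
      (inner ℝ (τ i.succ - τ 0) (τ j.succ - τ 0) : ℝ)) =
        (edgeMatrix τ).transpose * edgeMatrix τ := by
    ext i j
    simp [edgeMatrix, Matrix.mul_apply, PiLp.inner_apply, mul_comm]
  rw [simplexVolume, hgram, Matrix.det_mul, Matrix.det_transpose, ← sq, Real.sqrt_sq_eq_abs]

def edgeMap (τ : Splx n n) : Euc n →L[ℝ] Euc n :=
  (Matrix.toEuclideanLin (edgeMatrix τ)).toContinuousLinearMap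

lemma edgeMap_apply (τ : Splx n n) (x : Euc n) :
    edgeMap τ x = ∑ i, x i • (τ i.succ - τ 0) := by
  ext k
  simp [edgeMap, edgeMatrix, Matrix.mulVec, dotProduct, mul_comm]

lemma det_edgeMap (τ : Splx n n) :
    LinearMap.det (edgeMap τ : Euc n →ₗ[ℝ] Euc n) = (edgeMatrix τ).det := by
  rw [edgeMap, LinearMap.coe_toContinuousLinearMap, Matrix.toEuclideanLin,
    LinearMap.det_toLpLin]

def stdSimplexEuc (n : ℕ) : Set (Euc n) := WithLp.ofLp ⁻¹' stdSimplexSet n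

lemma stdSimplexSet_eq_inter :
    stdSimplexSet n = (⋂ i, {t | 0 ≤ t i}) ∩ {t | ∑ i, t i ≤ 1} := by
  ext t; simp [stdSimplexSet]

lemma convex_stdSimplexSet : Convex ℝ (stdSimplexSet n) := by
  rw [stdSimplexSet_eq_inter]
  exact (convex_iInter fun i => convex_halfSpace_ge (LinearMap.proj i).isLinear 0).inter
    (convex_halfSpace_le (f := fun t : Fin n → ℝ => ∑ i, t i)
      ⟨fun x y => by simp [Finset.sum_add_distrib], fun c x => by simp [Finset.mul_sum]⟩ 1)

lemma isCompact_stdSimplexSet : IsCompact (stdSimplexSet n) := by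
  refine Metric.isCompact_of_isClosed_isBounded ?_ ?_
  · rw [stdSimplexSet_eq_inter]
    exact (isClosed_iInter fun i => isClosed_le continuous_const (continuous_apply i)).inter
      (isClosed_le (by fun_prop) continuous_const)
  · refine (Metric.isBounded_Icc (0 : Fin n → ℝ) 1).subset fun t ht => ⟨ht.1, fun i => ?_⟩
    exact (Finset.single_le_sum (fun j _ => ht.1 j) (Finset.mem_univ i)).trans ht.2

lemma isCompact_stdSimplexEuc : IsCompact (stdSimplexEuc n) :=
  (PiLp.homeomorph 2 _).isCompact_preimage.2 isCompact_stdSimplexSet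

lemma measurableSet_stdSimplexEuc : MeasurableSet (stdSimplexEuc n) :=
  isCompact_stdSimplexEuc.isClosed.measurableSet

lemma convex_stdSimplexEuc : Convex ℝ (stdSimplexEuc n) :=
  convex_stdSimplexSet.linear_preimage (PiLp.continuousLinearEquiv 2 ℝ _).toLinearMap

lemma add_edgeMap_eq_sum_smul (τ : Splx n n) (x : Euc n) :
    τ 0 + edgeMap τ x =
      ∑ j, (Fin.cons (1 - ∑ i, x i) (fun i => x i) : Fin (n + 1) → ℝ) j • τ j := by
  simp only [edgeMap_apply, Fin.sum_univ_succ, Fin.cons_zero, Fin.cons_succ, smul_sub, sub_smul,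
    one_smul, Finset.sum_sub_distrib, ← Finset.sum_smul]
  abel

lemma range_subset_image_stdSimplexEuc (τ : Splx n n) :
    range τ ⊆ (fun x => τ 0 + edgeMap τ x) '' stdSimplexEuc n := by
  rintro _ ⟨j, rfl⟩
  induction j using Fin.cases with
  | zero => exact ⟨0, by simp [stdSimplexEuc, stdSimplexSet], by simp⟩
  | succ i =>
    refine ⟨EuclideanSpace.single i 1, ⟨fun k => ?_, by simp⟩, ?_⟩
    · simp only [PiLp.ofLp_single, Pi.single_apply]; split_ifs <;> norm_num
    · simp [edgeMap_apply]

lemma image_stdSimplexEuc_eq_convexHull (τ : Splx n n) :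
    (fun x => τ 0 + edgeMap τ x) '' stdSimplexEuc n = convexHull ℝ (range τ) := by
  refine Subset.antisymm ?_ (convexHull_min (range_subset_image_stdSimplexEuc τ) ?_)
  · rintro _ ⟨x, ⟨hx_nonneg, hx_sum⟩, rfl⟩
    show τ 0 + edgeMap τ x ∈ _
    rw [add_edgeMap_eq_sum_smul]
    refine (convex_convexHull ℝ _).sum_mem (fun j _ => ?_) (by simp [Fin.sum_univ_succ])
      (fun j _ => subset_convexHull ℝ _ (mem_range_self j))
    induction j using Fin.cases with
    | zero => simpa using hx_sum
    | succ i => simpa using hx_nonneg i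
  · rw [← image_image (τ 0 + ·) (edgeMap τ)]
    exact (convex_stdSimplexEuc.linear_image (edgeMap τ).toLinearMap).translate (τ 0)

lemma volume_convexHull (τ : Splx n n) :
    volume (convexHull ℝ (range τ)) =
      ENNReal.ofReal |(edgeMatrix τ).det| * volume (stdSimplexEuc n) := by
  rw [← image_stdSimplexEuc_eq_convexHull, ← image_image (τ 0 + ·) (edgeMap τ),
    image_add_left, measure_preimage_add, Measure.addHaar_image_continuousLinearMap, det_edgeMap]

def volumeForm (g : Euc n → ℝ) : RawForm n n :=
  fun x v => g x * (Matrix.of fun i j => v j i).det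

lemma simplexIntegral_volumeForm_eq_det_mul (τ : Splx n n) (g : Euc n → ℝ) :
    simplexIntegral τ (volumeForm g) =
      (edgeMatrix τ).det * ∫ x in stdSimplexEuc n, g (τ 0 + edgeMap τ x) := by
  rw [simplexIntegral, mul_comm, ← integral_mul_const,
    ← (PiLp.volume_preserving_ofLp (Fin n)).setIntegral_preimage_emb
      (MeasurableEquiv.toLp 2 (Fin n → ℝ)).symm.measurableEmbedding]
  simp only [edgeMap_apply]
  rfl

lemma setIntegral_convexHull_eq_abs_det_mul (τ : Splx n n) (hdet : (edgeMatrix τ).det ≠ 0)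
    (g : Euc n → ℝ) :
    ∫ x in convexHull ℝ (range τ), g x =
      |(edgeMatrix τ).det| * ∫ x in stdSimplexEuc n, g (τ 0 + edgeMap τ x) := by
  have hinj : InjOn (fun x => τ 0 + edgeMap τ x) (stdSimplexEuc n) := by
    have := (LinearMap.equivOfDetNeZero _ ((det_edgeMap τ).trans_ne hdet)).injective
    exact fun x _ y _ hxy => this (add_left_cancel hxy)
  have hderiv : ∀ x ∈ stdSimplexEuc n,
      HasFDerivWithinAt (fun x => τ 0 + edgeMap τ x) (edgeMap τ) (stdSimplexEuc n) x :=
    fun x _ => ((edgeMap τ).hasFDerivAt.const_add (τ 0)).hasFDerivWithinAt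
  rw [← image_stdSimplexEuc_eq_convexHull, integral_image_eq_integral_abs_det_fderiv_smul volume
    measurableSet_stdSimplexEuc hderiv hinj, ContinuousLinearMap.det, det_edgeMap,
    integral_smul, smul_eq_mul]

theorem simplexIntegral_volumeForm (τ : Splx n n) (g : Euc n → ℝ) :
    simplexIntegral τ (volumeForm g) =
      orientSign τ * ∫ x in interior (convexHull ℝ (range τ)), g x := by
  rw [simplexIntegral_volumeForm_eq_det_mul,
    setIntegral_congr_set ((convex_convexHull ℝ (range τ)).interior_ae_eq volume)]
  by_cases hdet : (edgeMatrix τ).det = 0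
  · simp [hdet, orientSign_eq_sign_det]
  · rw [setIntegral_convexHull_eq_abs_det_mul τ hdet, ← mul_assoc, orientSign_eq_sign_det]
    exact congrArg (· * _) (Real.sign_mul_abs _).symm

-- The constant `n! · vol(stdSimplexEuc n)` is `1`; only its finiteness is used.
lemma measureReal_interior_convexHull (τ : Splx n n) :
    volume.real (interior (convexHull ℝ (range τ))) =
      n.factorial * volume.real (stdSimplexEuc n) * simplexVolume τ := by
  rw [measureReal_congr ((convex_convexHull ℝ (range τ)).interior_ae_eq volume),
    measureReal_def, volume_convexHull, ENNReal.toReal_mul,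
    ENNReal.toReal_ofReal (abs_nonneg _), ← measureReal_def, simplexVolume_eq_abs_det]
  field_simp

end SimplexGeometry

section FiniteChains

variable {ι α : Type*} {n m : ℕ}

lemma Finsupp.sum_support_abs_mul_le (f : ι → α) (c : ι → ℝ) (w : α → ℝ)
    (hw : ∀ x, 0 ≤ w x) (s : Finset ι) :
    ∑ x ∈ (∑ i ∈ s, Finsupp.single (f i) (c i)).support,
        |(∑ i ∈ s, Finsupp.single (f i) (c i)) x| * w x ≤ ∑ i ∈ s, |c i| * w (f i) := by
  classical
  set A := ∑ i ∈ s, Finsupp.single (f i) (c i)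
  have hsupp : A.support ⊆ s.image f := by
    refine (Finsupp.support_finsetSum).trans (Finset.biUnion_subset.2 fun i hi => ?_)
    exact Finsupp.support_single_subset.trans
      (Finset.singleton_subset_iff.2 (Finset.mem_image_of_mem f hi))
  rw [Finset.sum_subset hsupp fun x _ hx => by simp [Finsupp.notMem_support_iff.1 hx]]
  calc ∑ x ∈ s.image f, |A x| * w x
      ≤ ∑ x ∈ s.image f, ∑ i ∈ s, |Finsupp.single (f i) (c i) x| * w x := by
        gcongr with x
        rw [← Finset.sum_mul, Finsupp.finsetSum_apply]
        exact mul_le_mul_of_nonneg_right (Finset.abs_sum_le_sum_abs _ _) (hw x)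
    _ = ∑ i ∈ s, |c i| * w (f i) := by
        rw [Finset.sum_comm]
        refine Finset.sum_congr rfl fun i hi => ?_
        rw [Finset.sum_eq_single_of_mem (f i) (Finset.mem_image_of_mem f hi)
          fun x _ hx => by simp [Ne.symm hx]]
        simp

lemma chainEquiv_refl (A : FormalSum n m) : ChainEquiv A A := by
  simp [ChainEquiv]

-- For `n = 0` the exponent is the junk value `0 / 0 = 0`, but then the volume is `1`.
lemma simplexVolume_rpow_div_self (τ : Splx n m) :
    simplexVolume τ ^ ((n : ℝ) / n) = simplexVolume τ := by
  rcases n.eq_zero_or_pos with rfl | hn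
  · simp [simplexVolume]
  · rw [div_self (by positivity), Real.rpow_one]

lemma massNorm_le_sum_support (A : FormalSum n m) :
    massNorm n m A ≤ ∑ τ ∈ A.support, |A τ| * simplexVolume τ := by
  rw [massNorm, projMass]
  refine csInf_le_of_le ⟨0, ?_⟩ ⟨A, chainEquiv_refl A, rfl⟩ ?_
  · rintro r ⟨B, -, rfl⟩
    exact Finset.sum_nonneg fun τ _ =>
      mul_nonneg (abs_nonneg _) (Real.rpow_nonneg (simplexVolume_nonneg _) _)
  · simp [simplexVolume_rpow_div_self]

lemma coordPlanes_self : coordPlanes n n = {Finset.univ} := by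
  ext s
  simpa [coordPlanes] using Finset.card_eq_iff_eq_univ s

lemma coordProj_univ : coordProj n Finset.univ = id := by
  ext x i
  simp [coordProj]

lemma naturalNorm_self_eq_massNorm (A : FormalSum n n) : naturalNorm n n n A = massNorm n n A := by
  rw [naturalNorm, Nat.sub_self, naturalNormAux, coordPlanes_self, Finset.sum_singleton,
    coordProj_univ, massNorm]

end FiniteChains

section SummableIntegrals

variable {α E : Type*} [MeasurableSpace α] {μ : Measure α} [NormedAddCommGroup E]
  [CompleteSpace E]

theorem integrable_tsum_of_summable_integral_norm {F : ℕ → α → E}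
    (hF_int : ∀ i, Integrable (F i) μ) (hF_sum : Summable fun i => ∫ a, ‖F i a‖ ∂μ) :
    Integrable (fun a => ∑' i, F i a) μ := by
  have hF_meas : ∀ i, AEMeasurable (fun a => ‖F i a‖ₑ) μ := fun i => (hF_int i).1.enorm
  have hlintegral : ∫⁻ a, ∑' i, ‖F i a‖ₑ ∂μ ≠ ⊤ := by
    rw [lintegral_tsum hF_meas]
    simp_rw [← ofReal_integral_norm_eq_lintegral_enorm (hF_int _)]
    rw [← ENNReal.ofReal_tsum_of_nonneg (fun i => integral_nonneg fun a => norm_nonneg _) hF_sum]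
    exact ENNReal.ofReal_ne_top
  have hsummable : ∀ᵐ a ∂μ, Summable fun i => F i a := by
    filter_upwards [ae_lt_top' (AEMeasurable.tsum hF_meas) hlintegral] with a ha
    exact (tsum_enorm_ne_top_iff_summable_norm.1 ha.ne).of_norm
  refine ⟨aestronglyMeasurable_of_tendsto_ae atTop
    (fun k => Finset.aestronglyMeasurable_sum (Finset.range k) fun i _ => (hF_int i).1) ?_, ?_⟩
  · filter_upwards [hsummable] with a ha
    simpa only [Finset.sum_apply] using ha.hasSum.tendsto_sum_nat
  · exact (lintegral_mono fun a => enorm_tsum_le_tsum_enorm).trans_lt hlintegral.lt_top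

end SummableIntegrals

section InfiniteChains

variable {n : ℕ}

def signedIndicator (τ : Splx n n) (c : ℝ) : Euc n → ℝ :=
  (interior (convexHull ℝ (range τ))).indicator fun _ => orientSign τ * c

lemma integral_signedIndicator_mul (τ : Splx n n) (c : ℝ) (g : Euc n → ℝ) :
    ∫ x, signedIndicator τ c x * g x =
      chainIntegralL n n (volumeForm g) (Finsupp.single τ c) := by
  simp only [signedIndicator, ← indicator_mul_left,
    integral_indicator isOpen_interior.measurableSet, integral_const_mul, chainIntegralL,
    Finsupp.linearCombination_single, simplexIntegral_volumeForm, smul_eq_mul]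
  ring

lemma integrable_signedIndicator (τ : Splx n n) (c : ℝ) : Integrable (signedIndicator τ c) :=
  (integrable_indicator_iff isOpen_interior.measurableSet).2 <| integrableOn_const <|
    (measure_mono interior_subset).trans_lt
      ((finite_range τ).isCompact_convexHull ℝ).measure_lt_top |>.ne

lemma integral_abs_signedIndicator_le (τ : Splx n n) (c : ℝ) :
    ∫ x, |signedIndicator τ c x| ≤
      n.factorial * volume.real (stdSimplexEuc n) * (|c| * simplexVolume τ) := by
  have habs : (fun x => |signedIndicator τ c x|) =
      (interior (convexHull ℝ (range τ))).indicator fun _ => |orientSign τ| * |c| := by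
    ext x
    simp only [signedIndicator, ← Real.norm_eq_abs, norm_indicator_eq_indicator_norm, norm_mul]
  have hvol := simplexVolume_nonneg τ
  rw [habs, integral_indicator_const _ isOpen_interior.measurableSet,
    measureReal_interior_convexHull, smul_eq_mul]
  calc _ ≤ n.factorial * volume.real (stdSimplexEuc n) * simplexVolume τ * (1 * |c|) := by
        gcongr
        exact Real.abs_sign_le_one _
    _ = _ := by ring

variable {g : Euc n → ℝ} {K : ℝ}

lemma integrable_signedIndicator_mul (τ : Splx n n) (c : ℝ) (hg : AEStronglyMeasurable g)
    (hK : ∀ x, |g x| ≤ K) : Integrable fun x => signedIndicator τ c x * g x :=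
  (integrable_signedIndicator τ c).mul_bdd hg (ae_of_all _ hK)

lemma integral_norm_signedIndicator_mul_le (τ : Splx n n) (c : ℝ) (hK : ∀ x, |g x| ≤ K) :
    ∫ x, ‖signedIndicator τ c x * g x‖ ≤
      K * (n.factorial * volume.real (stdSimplexEuc n)) * (|c| * simplexVolume τ) := by
  calc ∫ x, ‖signedIndicator τ c x * g x‖
      ≤ ∫ x, K * |signedIndicator τ c x| := by
        refine integral_mono_of_nonneg (ae_of_all _ fun x => norm_nonneg _)
          ((integrable_signedIndicator τ c).abs.const_mul K) (ae_of_all _ fun x => ?_)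
        simpa only [Real.norm_eq_abs, abs_mul, mul_comm K] using
          mul_le_mul_of_nonneg_left (hK x) (abs_nonneg (signedIndicator τ c x))
    _ ≤ K * (n.factorial * volume.real (stdSimplexEuc n) * (|c| * simplexVolume τ)) := by
        rw [integral_const_mul]
        exact mul_le_mul_of_nonneg_left (integral_abs_signedIndicator_le τ c)
          ((abs_nonneg _).trans (hK 0))
    _ = _ := by ring

variable (a : ℕ → ℝ) (σ : ℕ → Splx n n)

lemma coeffFun_mul_eq_tsum (g : Euc n → ℝ) :
    (fun x => coeffFun a σ x * g x) = fun x => ∑' i, signedIndicator (σ i) (a i) x * g x :=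
  funext fun _ => tsum_mul_right.symm

lemma summable_integral_norm_signedIndicator_mul
    (hsum : Summable fun i => |a i| * simplexVolume (σ i)) (hK : ∀ x, |g x| ≤ K) :
    Summable fun i => ∫ x, ‖signedIndicator (σ i) (a i) x * g x‖ :=
  (hsum.mul_left _).of_nonneg_of_le (fun _ => integral_nonneg fun _ => norm_nonneg _)
    fun i => integral_norm_signedIndicator_mul_le (σ i) (a i) hK

lemma integrable_coeffFun_mul (hsum : Summable fun i => |a i| * simplexVolume (σ i))
    (hg : AEStronglyMeasurable g) (hK : ∀ x, |g x| ≤ K) :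
    Integrable fun x => coeffFun a σ x * g x := by
  rw [coeffFun_mul_eq_tsum]
  exact integrable_tsum_of_summable_integral_norm
    (fun i => integrable_signedIndicator_mul (σ i) (a i) hg hK)
    (summable_integral_norm_signedIndicator_mul a σ hsum hK)

lemma hasSum_integral_coeffFun_mul (hsum : Summable fun i => |a i| * simplexVolume (σ i))
    (hg : AEStronglyMeasurable g) (hK : ∀ x, |g x| ≤ K) :
    HasSum (fun i => ∫ x, signedIndicator (σ i) (a i) x * g x)
      (∫ x, coeffFun a σ x * g x) := by
  rw [coeffFun_mul_eq_tsum]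
  exact hasSum_integral_of_summable_integral_norm
    (fun i => integrable_signedIndicator_mul (σ i) (a i) hg hK)
    (summable_integral_norm_signedIndicator_mul a σ hsum hK)

lemma naturalNorm_sum_single_le (c : ℕ → ℝ) (s : Finset ℕ) :
    naturalNorm n n n (∑ i ∈ s, Finsupp.single (σ i) (c i)) ≤
      ∑ i ∈ s, |c i| * simplexVolume (σ i) := by
  rw [naturalNorm_self_eq_massNorm]
  exact (massNorm_le_sum_support _).trans
    (Finsupp.sum_support_abs_mul_le σ c simplexVolume simplexVolume_nonneg s)

lemma naturalNorm_partialSum_sub_le (j k : ℕ) :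
    naturalNorm n n n ((∑ i ∈ Finset.range j, Finsupp.single (σ i) (a i)) -
        ∑ i ∈ Finset.range k, Finsupp.single (σ i) (a i)) ≤
      |∑ i ∈ Finset.range j, |a i| * simplexVolume (σ i) -
        ∑ i ∈ Finset.range k, |a i| * simplexVolume (σ i)| := by
  rcases le_total k j with h | h
  · rw [← Finset.sum_Ico_eq_sub _ h, ← Finset.sum_Ico_eq_sub _ h]
    exact (naturalNorm_sum_single_le σ a _).trans (le_abs_self _)
  · rw [abs_sub_comm, ← neg_sub, ← Finset.sum_Ico_eq_sub _ h, ← Finset.sum_Ico_eq_sub _ h,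
      ← Finset.sum_neg_distrib]
    simpa [← Finsupp.single_neg] using
      (naturalNorm_sum_single_le σ (-a) (Finset.Ico j k)).trans (le_abs_self _)

lemma natCauchy_partialSums (hsum : Summable fun i => |a i| * simplexVolume (σ i)) :
    NatCauchy n n n fun k => ∑ i ∈ Finset.range k, Finsupp.single (σ i) (a i) := by
  intro ε hε
  obtain ⟨N, hN⟩ := Metric.cauchySeq_iff.1 hsum.hasSum.tendsto_sum_nat.cauchySeq ε hε
  exact ⟨N, fun j hj k hk => (naturalNorm_partialSum_sub_le a σ j k).trans_lt (hN j hj k hk)⟩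

end InfiniteChains

theorem lebesgue_compatibility_infinite_chains_general (n : ℕ)
    (a : ℕ → ℝ) (σ : ℕ → Splx n n)
    (hsum : Summable fun i => |a i| * simplexVolume (σ i)) :
    NatCauchy n n n (fun k => ∑ i ∈ Finset.range k, Finsupp.single (σ i) (a i)) ∧
    Integrable (coeffFun a σ) volume ∧
    (∀ g : Euc n → ℝ, Continuous g → (∃ Kb, ∀ x, |g x| ≤ Kb) →
      Filter.Tendsto
        (fun k => chainIntegral (∑ i ∈ Finset.range k, Finsupp.single (σ i) (a i))
          (fun x v => g x * Matrix.det (Matrix.of fun i j => v j i)))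
        Filter.atTop (nhds (∫ x, coeffFun a σ x * g x))) := by
  refine ⟨natCauchy_partialSums a σ hsum, ?_, fun g hg ⟨K, hK⟩ => ?_⟩
  · simpa using integrable_coeffFun_mul a σ hsum (g := 1) aestronglyMeasurable_const
      fun _ => abs_one.le
  · have hsum_int := hasSum_integral_coeffFun_mul a σ hsum hg.aestronglyMeasurable hK
    refine hsum_int.tendsto_sum_nat.congr fun k => ?_
    simp only [integral_signedIndicator_mul, ← map_sum]
    rfl

/-- **compatibility with the Lebesgue integral for infinite chains of finite
mass.** Let `n ≥ 1` and `Σᵢ aᵢσᵢ` a formal infinite sum of oriented `n`-simplices in `ℝ^n`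
with `Σ |aᵢ| Mₙ(σᵢ) < ∞`.  Then the partial sums form a Cauchy sequence in the `n`-natural
norm (converging to an element `A ∈ X_{n,n}(ℝ^n)`); the coefficient function of the
infinite chain is integrable; and for every bounded continuous `n`-form
`ω = g dx₁∧⋯∧dxₙ`, the extended integral `L_ω·A` equals `∫_{ℝ^n} A(x) g(x) dmₙ(x)`. -/
theorem lebesgue_compatibility_infinite_chains (n : ℕ) (hn : 1 ≤ n)
    (a : ℕ → ℝ) (σ : ℕ → Splx n n)
    (hsum : Summable fun i => |a i| * simplexVolume (σ i)) :
    NatCauchy n n n (fun k => ∑ i ∈ Finset.range k, Finsupp.single (σ i) (a i)) ∧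
    Integrable (coeffFun a σ) volume ∧
    (∀ g : Euc n → ℝ, Continuous g → (∃ Kb, ∀ x, |g x| ≤ Kb) →
      Filter.Tendsto
        (fun k => chainIntegral (∑ i ∈ Finset.range k, Finsupp.single (σ i) (a i))
          (fun x v => g x * Matrix.det (Matrix.of fun i j => v j i)))
        Filter.atTop (nhds (∫ x, coeffFun a σ x * g x))) :=
  lebesgue_compatibility_infinite_chains_general n a σ hsum
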